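/- arXiv:2112.03856 — 6 statements merged into one kernel-verified Lean document; each statement's English description precedes it below -/
import Mathlib

section
/- In G = ⟨s, t, u | s^a = t^b = u^c = 1, stu = tus = ust⟩, no two elements among s, s^2, ..., s^{a-1}, t, t^2, ..., t^{b-1}, u, u^2, ..., u^{c-1} are conjugate to each other. -/
/-! Conjugate elements have the same image in any abelian quotient. Sending `s, t, u` to the
standard generators of `ℤ/a × ℤ/b × ℤ/c` respects the relations and maps `s^i`, `t^j`, `u^l` to
`(i,0,0)`, `(0,j,0)`, `(0,0,l)`, which are pairwise distinct for the exponents in question. -/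

/-- The relations of the J-group `J(a,b,c)`:
`s^a = t^b = u^c = 1` and `stu = tus = ust`. -/
def jRels (a b c : ℕ) : Set (FreeGroup (Fin 3)) :=
  { FreeGroup.of 0 ^ a, FreeGroup.of 1 ^ b, FreeGroup.of 2 ^ c,
    (FreeGroup.of 0 * FreeGroup.of 1 * FreeGroup.of 2) *
      (FreeGroup.of 1 * FreeGroup.of 2 * FreeGroup.of 0)⁻¹,
    (FreeGroup.of 0 * FreeGroup.of 1 * FreeGroup.of 2) *
      (FreeGroup.of 2 * FreeGroup.of 0 * FreeGroup.of 1)⁻¹ }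

/-- The J-group `J(a,b,c) = ⟨s, t, u | s^a = t^b = u^c = 1, stu = tus = ust⟩`. -/
abbrev JGroup (a b c : ℕ) := PresentedGroup (jRels a b c)

/-- The generator `s` of `J(a,b,c)`. -/
def jS (a b c : ℕ) : JGroup a b c := PresentedGroup.of 0
/-- The generator `t` of `J(a,b,c)`. -/
def jT (a b c : ℕ) : JGroup a b c := PresentedGroup.of 1
/-- The generator `u` of `J(a,b,c)`. -/
def jU (a b c : ℕ) : JGroup a b c := PresentedGroup.of 2

variable {a b c : ℕ}

def jLiftComm {A : Type*} [CommGroup A] (x y z : A) (hx : x ^ a = 1) (hy : y ^ b = 1)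
    (hz : z ^ c = 1) : JGroup a b c →* A :=
  PresentedGroup.toGroup (f := ![x, y, z]) <| by
    rintro r (rfl | rfl | rfl | rfl | rfl)
    · simpa using hx
    · simpa using hy
    · simpa using hz
    all_goals rw [map_mul, map_inv, mul_inv_eq_one]; simp [mul_comm, mul_left_comm]

section jLiftComm

variable {A : Type*} [CommGroup A] {x y z : A} {hx : x ^ a = 1} {hy : y ^ b = 1} {hz : z ^ c = 1}

@[simp] lemma jLiftComm_jS : jLiftComm x y z hx hy hz (jS a b c) = x := PresentedGroup.toGroup.of _
@[simp] lemma jLiftComm_jT : jLiftComm x y z hx hy hz (jT a b c) = y := PresentedGroup.toGroup.of _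
@[simp] lemma jLiftComm_jU : jLiftComm x y z hx hy hz (jU a b c) = z := PresentedGroup.toGroup.of _

end jLiftComm

def jExponentSums : JGroup a b c →* Multiplicative (ZMod a × ZMod b × ZMod c) :=
  jLiftComm (.ofAdd (1, 0, 0)) (.ofAdd (0, 1, 0)) (.ofAdd (0, 0, 1))
    (by simp [← ofAdd_nsmul]) (by simp [← ofAdd_nsmul]) (by simp [← ofAdd_nsmul])

@[simp] lemma jExponentSums_jS_pow (i : ℕ) :
    jExponentSums (jS a b c ^ i) = .ofAdd ((i : ZMod a), 0, 0) := by
  simp [jExponentSums, ← ofAdd_nsmul]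

@[simp] lemma jExponentSums_jT_pow (i : ℕ) :
    jExponentSums (jT a b c ^ i) = .ofAdd (0, (i : ZMod b), 0) := by
  simp [jExponentSums, ← ofAdd_nsmul]

@[simp] lemma jExponentSums_jU_pow (i : ℕ) :
    jExponentSums (jU a b c ^ i) = .ofAdd (0, 0, (i : ZMod c)) := by
  simp [jExponentSums, ← ofAdd_nsmul]

lemma jExponentSums_eq_of_isConj {g h : JGroup a b c} (hgh : IsConj g h) :
    jExponentSums g = jExponentSums h :=
  isConj_iff_eq.mp (jExponentSums.map_isConj hgh)

lemma ZMod.natCast_ne_zero_of_pos_of_lt {n i : ℕ} (hi0 : 0 < i) (hi : i < n) :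
    (i : ZMod n) ≠ 0 :=
  fun h => (Nat.le_of_dvd hi0 ((ZMod.natCast_eq_zero_iff i n).mp h)).not_gt hi

theorem stmt2_general (a b c : ℕ) :
    (∀ i j : ℕ, 1 ≤ i → i < a → 1 ≤ j → j < a → i ≠ j →
      ¬ IsConj (jS a b c ^ i) (jS a b c ^ j)) ∧
    (∀ i j : ℕ, 1 ≤ i → i < b → 1 ≤ j → j < b → i ≠ j →
      ¬ IsConj (jT a b c ^ i) (jT a b c ^ j)) ∧
    (∀ i j : ℕ, 1 ≤ i → i < c → 1 ≤ j → j < c → i ≠ j →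
      ¬ IsConj (jU a b c ^ i) (jU a b c ^ j)) ∧
    (∀ i j : ℕ, 1 ≤ i → i < a → 1 ≤ j → j < b →
      ¬ IsConj (jS a b c ^ i) (jT a b c ^ j)) ∧
    (∀ i j : ℕ, 1 ≤ i → i < a → 1 ≤ j → j < c →
      ¬ IsConj (jS a b c ^ i) (jU a b c ^ j)) ∧
    (∀ i j : ℕ, 1 ≤ i → i < b → 1 ≤ j → j < c →
      ¬ IsConj (jT a b c ^ i) (jU a b c ^ j)) := by
  refine ⟨?_, ?_, ?_, ?_, ?_, ?_⟩ <;> intro i j hi0 hi hj0 hj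
  · refine fun hij h => hij (CharP.natCast_injOn_Iio (ZMod a) a hi hj ?_)
    simpa using jExponentSums_eq_of_isConj h
  · refine fun hij h => hij (CharP.natCast_injOn_Iio (ZMod b) b hi hj ?_)
    simpa using jExponentSums_eq_of_isConj h
  · refine fun hij h => hij (CharP.natCast_injOn_Iio (ZMod c) c hi hj ?_)
    simpa using jExponentSums_eq_of_isConj h
  all_goals
    refine fun h => ZMod.natCast_ne_zero_of_pos_of_lt hi0 hi ?_
    have h := jExponentSums_eq_of_isConj h
    simp only [jExponentSums_jS_pow, jExponentSums_jT_pow, jExponentSums_jU_pow,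
      EmbeddingLike.apply_eq_iff_eq, Prod.mk.injEq] at h
    tauto

/-- In `G = ⟨s, t, u | s^a = t^b = u^c = 1, stu = tus = ust⟩`, no two elements among
`s, s², …, s^{a-1}, t, t², …, t^{b-1}, u, u², …, u^{c-1}` are conjugate to each other. -/
theorem stmt2 (a b c : ℕ) (ha : 2 ≤ a) (hb : 2 ≤ b) (hc : 2 ≤ c) :
    (∀ i j : ℕ, 1 ≤ i → i < a → 1 ≤ j → j < a → i ≠ j →
      ¬ IsConj (jS a b c ^ i) (jS a b c ^ j)) ∧
    (∀ i j : ℕ, 1 ≤ i → i < b → 1 ≤ j → j < b → i ≠ j →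
      ¬ IsConj (jT a b c ^ i) (jT a b c ^ j)) ∧
    (∀ i j : ℕ, 1 ≤ i → i < c → 1 ≤ j → j < c → i ≠ j →
      ¬ IsConj (jU a b c ^ i) (jU a b c ^ j)) ∧
    (∀ i j : ℕ, 1 ≤ i → i < a → 1 ≤ j → j < b →
      ¬ IsConj (jS a b c ^ i) (jT a b c ^ j)) ∧
    (∀ i j : ℕ, 1 ≤ i → i < a → 1 ≤ j → j < c →
      ¬ IsConj (jS a b c ^ i) (jU a b c ^ j)) ∧
    (∀ i j : ℕ, 1 ≤ i → i < b → 1 ≤ j → j < c →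
      ¬ IsConj (jT a b c ^ i) (jU a b c ^ j)) :=
  stmt2_general a b c
end

section
/- In G = ⟨s, t, u | s^a = t^b = u^c = 1, stu = tus = ust⟩, the generators s, t, and u have orders exactly a, b, and c respectively. -/
/-!
The relation `x ^ n = 1` gives `orderOf x ∣ n`. Conversely, `J(a,b,c)` maps onto each of
`ℤ/a`, `ℤ/b`, `ℤ/c` by sending one generator to `1` and the other two to `0`: the relations
`stu = tus = ust` hold in every abelian group. So the order of each generator is also a multiple
of the corresponding exponent.
-/

namespace PresentedGroup

variable {α : Type*} {rels : Set (FreeGroup α)}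

theorem orderOf_of_eq_of_lift {G : Type*} [Group G] {i : α} {n : ℕ}
    (hpow : FreeGroup.of i ^ n ∈ rels) (f : α → G) (hf : ∀ r ∈ rels, FreeGroup.lift f r = 1)
    (hfi : orderOf (f i) = n) : orderOf (of (rels := rels) i) = n := by
  have hn : of (rels := rels) i ^ n = 1 :=
    (map_pow (mk rels) _ n).symm.trans (one_of_mem hpow)
  have hdvd : orderOf (f i) ∣ orderOf (of (rels := rels) i) := by
    simpa only [toGroup.of hf] using orderOf_map_dvd (toGroup hf) (of i)
  exact Nat.dvd_antisymm (orderOf_dvd_of_pow_eq_one hn) (hfi ▸ hdvd)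

end PresentedGroup

theorem lift_eq_one_of_mem_jRels {G : Type*} [CommGroup G] {a b c : ℕ} {f : Fin 3 → G}
    (ha : f 0 ^ a = 1) (hb : f 1 ^ b = 1) (hc : f 2 ^ c = 1) :
    ∀ r ∈ jRels a b c, FreeGroup.lift f r = 1 := by
  simp only [jRels, Set.mem_insert_iff, Set.mem_singleton_iff]
  rintro r (rfl | rfl | rfl | rfl | rfl) <;>
    simp [ha, hb, hc, mul_comm, mul_left_comm]

theorem JGroup.orderOf_of (a b c : ℕ) (i : Fin 3) :
    orderOf (PresentedGroup.of (rels := jRels a b c) i) = ![a, b, c] i := by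
  have hg : orderOf (Multiplicative.ofAdd (1 : ZMod (![a, b, c] i))) = ![a, b, c] i := by
    rw [orderOf_ofAdd_eq_addOrderOf, ZMod.addOrderOf_one]
  set f : Fin 3 → Multiplicative (ZMod (![a, b, c] i)) := Pi.mulSingle i (.ofAdd 1)
  have hf : ∀ j, f j ^ ![a, b, c] j = 1 := by
    intro j
    obtain rfl | hj := eq_or_ne j i
    · simpa only [f, Pi.mulSingle_eq_same, hg] using pow_orderOf_eq_one (f j)
    · simp only [f, Pi.mulSingle_eq_of_ne hj, one_pow]
  refine PresentedGroup.orderOf_of_eq_of_lift ?_ f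
    (lift_eq_one_of_mem_jRels (hf 0) (hf 1) (hf 2)) (by simpa only [f, Pi.mulSingle_eq_same])
  fin_cases i <;> simp [jRels]

theorem stmt3_general (a b c : ℕ) :
    orderOf (jS a b c) = a ∧ orderOf (jT a b c) = b ∧ orderOf (jU a b c) = c :=
  ⟨JGroup.orderOf_of a b c 0, JGroup.orderOf_of a b c 1, JGroup.orderOf_of a b c 2⟩

/-- In `G = ⟨s, t, u | s^a = t^b = u^c = 1, stu = tus = ust⟩`, the generators `s`, `t`, `u`
have orders exactly `a`, `b`, `c` respectively. -/
theorem stmt3 (a b c : ℕ) (ha : 2 ≤ a) (hb : 2 ≤ b) (hc : 2 ≤ c) :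
    orderOf (jS a b c) = a ∧ orderOf (jT a b c) = b ∧ orderOf (jU a b c) = c :=
  stmt3_general a b c
end

section
/- Let k, n, m ≥ 2 with n and m coprime, let W(k,n,m) be the group presented by generators x₁, ..., xₙ with relations xᵢᵏ = 1 for all i, and x₁x₂⋯ (m factors, indices mod n) = xᵢxᵢ₊₁⋯ (m factors) for all i. Write m = qn + r for the Euclidean division of m by n, and set δ = x₁x₂⋯x_m (indices mod n). Then xᵢδ = δx_{i+r} for all i = 1, ..., n (indices mod n). -/
/-! Every cyclic `m`-factor product equals `δ`, so
`xᵢ δ = xᵢ (x_{i+1} ⋯ x_{i+m}) = (xᵢ ⋯ x_{i+m-1}) x_{i+m} = δ x_{i+m}`, and `i + m ≡ i + r (mod n)`. -/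

/-- The word `x_i x_{i+1} ⋯ x_{i+l-1}` (with `l` factors, indices mod `n`) in the free
group on `ZMod n`. -/
def wWord (n l : ℕ) (i : ZMod n) : FreeGroup (ZMod n) :=
  ((List.range l).map fun j => FreeGroup.of (i + (j : ZMod n))).prod

/-- The relations of the toric reflection group `W(k,n,m)`: `xᵢ^k = 1` for all `i`, and all
the `m`-factor products `x_i x_{i+1} ⋯ x_{i+m-1}` (indices mod `n`) are equal. -/
def wRels (k n m : ℕ) : Set (FreeGroup (ZMod n)) :=
  (Set.range fun i : ZMod n => FreeGroup.of i ^ k) ∪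
  (Set.range fun i : ZMod n => wWord n m 1 * (wWord n m i)⁻¹)

/-- The toric reflection group `W(k,n,m)`. -/
abbrev TorGroup (k n m : ℕ) := PresentedGroup (wRels k n m)

/-- The generator `xᵢ` of `W(k,n,m)`, for `i : ZMod n`. -/
def tx (k n m : ℕ) (i : ZMod n) : TorGroup k n m := PresentedGroup.of i

/-- The product `x_i x_{i+1} ⋯ x_{i+l-1}` (with `l` factors, indices mod `n`) in
`W(k,n,m)`. -/
def txProd (k n m : ℕ) (l : ℕ) (i : ZMod n) : TorGroup k n m :=
  ((List.range l).map fun j => tx k n m (i + (j : ZMod n))).prod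

-- In `wWord` and `txProd`, `(j : ZMod n)` coerces the whole list `List.range l` through the
-- list monad, so the products range over `ZMod n` rather than over `ℕ`.
lemma list_range_coe_eq_map_cast (n l : ℕ) :
    ((List.range l : List ℕ) : List (ZMod n)) = (List.range l).map (Nat.cast : ℕ → ZMod n) := by
  simp only [List.pure_def, List.bind_eq_flatMap, ← List.map_eq_flatMap]

lemma txProd_eq_mk (k n m l : ℕ) (i : ZMod n) :
    txProd k n m l i = PresentedGroup.mk (wRels k n m) (wWord n l i) := by
  simp only [txProd, wWord, map_list_prod, List.map_map]
  rfl

lemma txProd_eq_txProd_one (k n m : ℕ) (i : ZMod n) :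
    txProd k n m m i = txProd k n m m 1 := by
  rw [txProd_eq_mk, txProd_eq_mk]
  exact (PresentedGroup.mk_eq_mk_of_mul_inv_mem (Or.inr ⟨i, rfl⟩)).symm

lemma txProd_succ (k n m l : ℕ) (i : ZMod n) :
    txProd k n m (l + 1) i = txProd k n m l i * tx k n m (i + l) := by
  simp only [txProd, list_range_coe_eq_map_cast, List.map_map, List.prod_range_succ]
  rfl

lemma txProd_succ' (k n m l : ℕ) (i : ZMod n) :
    txProd k n m (l + 1) i = tx k n m i * txProd k n m l (i + 1) := by
  simp only [txProd, list_range_coe_eq_map_cast, List.map_map, List.prod_range_succ']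
  refine congrArg₂ _ (by simp) (congrArg List.prod (List.map_congr_left fun j _ => ?_))
  simp only [Function.comp_apply, Nat.cast_succ, add_assoc, add_comm (1 : ZMod n)]

theorem stmt7_general (k n m : ℕ) :
    ∀ i : ZMod n,
      tx k n m i * txProd k n m m 1 = txProd k n m m 1 * tx k n m (i + ((m % n : ℕ) : ZMod n)) := by
  intro i
  calc tx k n m i * txProd k n m m 1
      = tx k n m i * txProd k n m m (i + 1) := by rw [txProd_eq_txProd_one k n m (i + 1)]
    _ = txProd k n m m i * tx k n m (i + m) := by rw [← txProd_succ', txProd_succ]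
    _ = txProd k n m m 1 * tx k n m (i + ((m % n : ℕ) : ZMod n)) := by
      rw [txProd_eq_txProd_one, ZMod.natCast_mod]

/-- Let `m = qn + r` be the Euclidean division of `m` by `n`, and set
`δ = x₁x₂⋯x_m` (indices mod `n`) in `W(k,n,m)`. Then `xᵢ δ = δ x_{i+r}` for all `i`. -/
theorem stmt7 (k n m : ℕ) (hk : 2 ≤ k) (hn : 2 ≤ n) (hm : 2 ≤ m)
    (hco : Nat.Coprime n m) :
    ∀ i : ZMod n,
      tx k n m i * txProd k n m m 1 = txProd k n m m 1 * tx k n m (i + ((m % n : ℕ) : ZMod n)) :=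
  stmt7_general k n m
end

section
/- In the toric reflection group W(k,n,m), the element c = (x₁x₂⋯xₙ)^m is central. -/
/-! The product `x_i ⋯ x_{i+nm-1}` has two readings: `n` blocks of length `m`, each equal to
`x_1 ⋯ x_m` by the defining relations, so it does not depend on `i`; and `m` full turns
`x_i ⋯ x_{i+n-1}`, which for `i = 1` is `c`. Independence of the starting index then lets `c`
absorb a generator on either side: `x_a c = x_a ⋯ x_{a+nm} = c x_{a+nm} = c x_a`. -/

theorem PresentedGroup.mem_center_of_forall_commute {α : Type*} {rels : Set (FreeGroup α)}
    {z : PresentedGroup rels} (h : ∀ a, Commute (PresentedGroup.of a) z) :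
    z ∈ Subgroup.center (PresentedGroup rels) :=
  Subgroup.mem_center_iff.mpr fun g =>
    PresentedGroup.generated_by rels (Subgroup.centralizer {z})
      (fun a => Subgroup.mem_centralizer_singleton_iff.mpr (h a).eq) g
      |> Subgroup.mem_centralizer_singleton_iff.mp

namespace TorGroup

variable {k n m : ℕ}

theorem txProd_zero (i : ZMod n) : txProd k n m 0 i = 1 := rfl

theorem txProd_one (i : ZMod n) : txProd k n m 1 i = tx k n m i := by
  simp [txProd]

theorem txProd_succ (l : ℕ) (i : ZMod n) :
    txProd k n m (l + 1) i = txProd k n m l i * tx k n m (i + l) := by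
  simp [txProd, List.range_succ]

theorem txProd_add (a b : ℕ) (i : ZMod n) :
    txProd k n m (a + b) i = txProd k n m a i * txProd k n m b (i + a) := by
  induction b with
  | zero => simp [txProd_zero]
  | succ b ih =>
    rw [← Nat.add_assoc, txProd_succ, ih, txProd_succ, mul_assoc, Nat.cast_add, add_assoc]

theorem mk_wWord (l : ℕ) (i : ZMod n) :
    PresentedGroup.mk (wRels k n m) (wWord n l i) = txProd k n m l i := by
  rw [wWord, map_list_prod, List.map_map]
  rfl

theorem txProd_m_eq_txProd_m_one (i : ZMod n) : txProd k n m m i = txProd k n m m 1 := by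
  have hrel : wWord n m 1 * (wWord n m i)⁻¹ ∈ wRels k n m := Or.inr ⟨i, rfl⟩
  rw [← mk_wWord, ← mk_wWord, PresentedGroup.mk_eq_mk_of_mul_inv_mem hrel]

theorem txProd_m_mul (s : ℕ) (i : ZMod n) : txProd k n m (m * s) i = txProd k n m m 1 ^ s := by
  induction s generalizing i with
  | zero => simp [txProd_zero]
  | succ s ih => rw [Nat.mul_succ, txProd_add, txProd_m_eq_txProd_m_one, ih, pow_succ]

theorem txProd_n_pow (s : ℕ) (i : ZMod n) : txProd k n m n i ^ s = txProd k n m (n * s) i := by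
  induction s with
  | zero => simp [txProd_zero]
  | succ s ih => rw [Nat.mul_succ, txProd_add, ← ih, pow_succ, Nat.cast_mul,
      ZMod.natCast_self, zero_mul, add_zero]

theorem txProd_n_mul_m (i : ZMod n) : txProd k n m (n * m) i = txProd k n m m 1 ^ n := by
  rw [mul_comm, txProd_m_mul]

theorem commute_tx_txProd_n_pow_m (a : ZMod n) :
    Commute (tx k n m a) (txProd k n m n 1 ^ m) := by
  have hperiod : a + ((n * m : ℕ) : ZMod n) = a := by
    rw [Nat.cast_mul, ZMod.natCast_self, zero_mul, add_zero]
  have hleft := txProd_add (k := k) (m := m) 1 (n * m) a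
  have hright := txProd_add (k := k) (m := m) (n * m) 1 a
  rw [txProd_one, txProd_n_mul_m] at hleft
  rw [txProd_one, txProd_n_mul_m, hperiod] at hright
  rw [Commute, SemiconjBy, txProd_n_pow, txProd_n_mul_m, ← hleft, ← hright, add_comm]

end TorGroup

theorem stmt8_general (k n m : ℕ) :
    txProd k n m n 1 ^ m ∈ Subgroup.center (TorGroup k n m) :=
  PresentedGroup.mem_center_of_forall_commute TorGroup.commute_tx_txProd_n_pow_m

/-- In the toric reflection group `W(k,n,m)`, the element `c = (x₁x₂⋯xₙ)^m` is central. -/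
theorem stmt8 (k n m : ℕ) (hk : 2 ≤ k) (hn : 2 ≤ n) (hm : 2 ≤ m)
    (hco : Nat.Coprime n m) :
    txProd k n m n 1 ^ m ∈ Subgroup.center (TorGroup k n m) :=
  stmt8_general k n m
end

section
/- Let F be a group generated by elements x₁, ..., xₙ (indices mod n). The set of relations xᵢ(x₁x₂⋯x_m) = (x₁x₂⋯x_m)x_{i+m} for all 1 ≤ i ≤ n is equivalent to the set of relations x₁x₂⋯x_m = xⱼxⱼ₊₁⋯xⱼ₊ₘ₋₁ for all j = 2, ..., n, i.e., each set of relations implies the other. -/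
/-!
Write `P i = xᵢ xᵢ₊₁ ⋯ xᵢ₊ₘ₋₁`. Peeling off the first or the last factor of `P i` with one more
factor gives the identity `xᵢ P (i+1) = P i xᵢ₊ₘ`. Given the relation `xᵢ P 1 = P 1 xᵢ₊ₘ`, it
follows by cancellation that `P (i+1) = P 1` if and only if `P i = P 1`, so `P i = P 1` spreads
from `i = 1` to every index reachable by steps of `±1`. Conversely, if all `P i` agree, the
identity is the relation.
-/

section ConsecutiveProd

variable {R F : Type*} [Group F]

def consecutiveProd [AddMonoidWithOne R] (x : R → F) (i : R) (m : ℕ) : F :=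
  ((List.range m).map fun j : ℕ => x (i + j)).prod

section AddMonoidWithOne

variable [AddMonoidWithOne R] (x : R → F) (i : R) (m : ℕ)

theorem consecutiveProd_succ :
    consecutiveProd x i (m + 1) = consecutiveProd x i m * x (i + m) :=
  List.prod_range_succ _ m

theorem consecutiveProd_succ' :
    consecutiveProd x i (m + 1) = x i * consecutiveProd x (i + 1) m := by
  simp only [consecutiveProd, List.prod_range_succ', Nat.cast_zero, add_zero, Nat.cast_succ,
    add_assoc, Nat.cast_add_one_comm]

theorem mul_consecutiveProd_add_one :
    x i * consecutiveProd x (i + 1) m = consecutiveProd x i m * x (i + m) := by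
  rw [← consecutiveProd_succ, consecutiveProd_succ']

theorem consecutiveProd_add_one_eq_iff {i : R} {p : F} (h : x i * p = p * x (i + m)) :
    consecutiveProd x (i + 1) m = p ↔ consecutiveProd x i m = p := by
  rw [← mul_right_inj (x i), mul_consecutiveProd_add_one, h, mul_left_inj]

end AddMonoidWithOne

theorem consecutiveProd_relations_iff [AddGroupWithOne R]
    (hR : Function.Surjective (Int.cast : ℤ → R)) (x : R → F) (m : ℕ) :
    (∀ i, x i * consecutiveProd x 1 m = consecutiveProd x 1 m * x (i + m)) ↔
      ∀ i, consecutiveProd x 1 m = consecutiveProd x i m := by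
  set p := consecutiveProd x 1 m
  constructor
  · intro h i
    suffices ∀ k : ℤ, consecutiveProd x (k + 1) m = p by
      obtain ⟨k, hk⟩ := hR (i - 1)
      rw [← this k, hk, sub_add_cancel]
    intro k
    induction k using Int.induction_on with
    | zero => simp [p]
    | succ k ih =>
      rwa [Int.cast_add, Int.cast_one, consecutiveProd_add_one_eq_iff x m (h _)]
    | pred k ih =>
      rwa [← consecutiveProd_add_one_eq_iff x m (h _), Int.cast_sub, Int.cast_one, sub_add_cancel]
  · intro h i
    calc x i * p = x i * consecutiveProd x (i + 1) m := by rw [← h]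
      _ = consecutiveProd x i m * x (i + m) := mul_consecutiveProd_add_one x i m
      _ = p * x (i + m) := by rw [← h]

end ConsecutiveProd

theorem stmt11_general (n m : ℕ) {F : Type*} [Group F]
    (x : ZMod n → F) :
    (∀ i : ZMod n,
        x i * ((List.range m).map fun j => x (1 + (j : ZMod n))).prod =
          ((List.range m).map fun j => x (1 + (j : ZMod n))).prod * x (i + (m : ZMod n))) ↔
    (∀ i : ZMod n,
        ((List.range m).map fun j => x (1 + (j : ZMod n))).prod =
          ((List.range m).map fun j => x (i + (j : ZMod n))).prod) := by
  -- The ascription `(j : ZMod n)` coerces the list `List.range m` itself, by a monadic lift.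
  have hcast : (List.range m >>= fun j => pure (j : ZMod n)) = (List.range m).map Nat.cast := by
    rw [List.bind_eq_flatMap]
    exact List.flatMap_pure_eq_map _ _
  simp only [hcast, List.map_map, Function.comp_def]
  exact consecutiveProd_relations_iff ZMod.intCast_surjective x m

/-- Let `F` be a group with elements `x₁, …, xₙ` (indices mod `n`). The set of relations
`xᵢ (x₁⋯x_m) = (x₁⋯x_m) x_{i+m}` for all `i` is equivalent to the set of relations
`x₁⋯x_m = x_j x_{j+1} ⋯ x_{j+m-1}` for all `j` (each product having `m` factors with
consecutive indices mod `n`). -/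
theorem stmt11 (n m : ℕ) (hn : 2 ≤ n) (hm : 2 ≤ m) {F : Type*} [Group F]
    (x : ZMod n → F) :
    (∀ i : ZMod n,
        x i * ((List.range m).map fun j => x (1 + (j : ZMod n))).prod =
          ((List.range m).map fun j => x (1 + (j : ZMod n))).prod * x (i + (m : ZMod n))) ↔
    (∀ i : ZMod n,
        ((List.range m).map fun j => x (1 + (j : ZMod n))).prod =
          ((List.range m).map fun j => x (i + (j : ZMod n))).prod) :=
  stmt11_general n m x
end

section
/- In the group G = ⟨s, t, u | s^k = t^n = u^m = 1, stu = tus = ust⟩, the element (st)^{nm} equals (stu)^{nm}, and in particular (x₁x₂⋯xₙ)^m = (stu)^{nm} where xᵢ = t^{i-1} s t^{1-i} and indices run over i = 1, ..., n. -/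
/-! Since `st` commutes with `u` and `u^m = 1`, the powers `(st)^{nm}` and `(stu)^{nm}` agree.
The product `x₁ ⋯ xₙ` of the conjugates `xᵢ = t^{i-1} s t^{1-i}` telescopes to `(st)^n t^{-n}`,
which is `(st)^n` because `t^n = 1`. -/

theorem Commute.mul_pow_mul_eq_pow_mul {G : Type*} [Monoid G] {x u : G} (h : Commute x u)
    {m : ℕ} (hu : u ^ m = 1) (n : ℕ) : (x * u) ^ (n * m) = x ^ (n * m) := by
  rw [h.mul_pow, mul_comm n m, pow_mul u, hu, one_pow, mul_one]

theorem prod_map_range_conj_pow {G : Type*} [Group G] (s t : G) (n : ℕ) :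
    ((List.range n).map fun i => t ^ i * s * (t ^ i)⁻¹).prod = (s * t) ^ n * (t ^ n)⁻¹ := by
  induction n with
  | zero => simp
  | succ n ih =>
    rw [List.range_succ, List.map_append, List.prod_append, ih]
    simp only [List.map_cons, List.map_nil, List.prod_singleton, pow_succ]
    group

namespace JGroup

variable {a b c : ℕ}

theorem jT_pow : jT a b c ^ b = 1 :=
  PresentedGroup.one_of_mem (by simp [jRels])

theorem jU_pow : jU a b c ^ c = 1 :=
  PresentedGroup.one_of_mem (by simp [jRels])

theorem commute_jS_mul_jT_jU : Commute (jS a b c * jT a b c) (jU a b c) := by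
  have h : jS a b c * jT a b c * jU a b c = jU a b c * jS a b c * jT a b c :=
    PresentedGroup.mk_eq_mk_of_mul_inv_mem (by simp [jRels])
  rw [Commute, SemiconjBy, h, mul_assoc]

end JGroup

theorem stmt14_general (k n m : ℕ) :
    (jS k n m * jT k n m) ^ (n * m) = (jS k n m * jT k n m * jU k n m) ^ (n * m) ∧
    (((List.range n).map fun i => jT k n m ^ i * jS k n m * (jT k n m ^ i)⁻¹)).prod ^ m =
      (jS k n m * jT k n m * jU k n m) ^ (n * m) := by
  have hpow : (jS k n m * jT k n m) ^ (n * m) = (jS k n m * jT k n m * jU k n m) ^ (n * m) :=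
    (JGroup.commute_jS_mul_jT_jU.mul_pow_mul_eq_pow_mul JGroup.jU_pow n).symm
  refine ⟨hpow, ?_⟩
  rw [prod_map_range_conj_pow, JGroup.jT_pow, inv_one, mul_one, ← pow_mul, hpow]

/-- In `G = ⟨s, t, u | s^k = t^n = u^m = 1, stu = tus = ust⟩`, we have
`(st)^{nm} = (stu)^{nm}`, and in particular `(x₁x₂⋯xₙ)^m = (stu)^{nm}` where
`xᵢ = t^{i-1} s t^{1-i}` for `i = 1, …, n`. -/
theorem stmt14 (k n m : ℕ) (hk : 2 ≤ k) (hn : 2 ≤ n) (hm : 2 ≤ m) :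
    (jS k n m * jT k n m) ^ (n * m) = (jS k n m * jT k n m * jU k n m) ^ (n * m) ∧
    (((List.range n).map fun i => jT k n m ^ i * jS k n m * (jT k n m ^ i)⁻¹)).prod ^ m =
      (jS k n m * jT k n m * jU k n m) ^ (n * m) :=
  stmt14_general k n m
end
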